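/- arXiv:1905.11655 — 6 statements merged into one kernel-verified Lean document; each statement's English description precedes it below -/
import Mathlib

section
/- Let G be a graph, F a k-fort of G, and S a k-power dominating set of G. Then S ∩ N[F] ≠ ∅. -/
open SimpleGraph

/-- Closed neighborhood of a set of vertices: `N[S]`. -/
def closedNbhd {V : Type*} (G : SimpleGraph V) (S : Set V) : Set V :=
  S ∪ {v | ∃ u ∈ S, G.Adj u v}

/-- The monitored sets `P^i(S)` of the k-power domination process:
`P^0(S) = N[S]`, `P^{i+1}(S) = ⋃ {N[v] : v ∈ P^i(S), |N[v] \ P^i(S)| ≤ k}`. -/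
def monitored {V : Type*} (G : SimpleGraph V) (k : ℕ) (S : Set V) : ℕ → Set V
  | 0 => closedNbhd G S
  | i + 1 => {w | ∃ v ∈ monitored G k S i,
      (closedNbhd G {v} \ monitored G k S i).ncard ≤ k ∧ w ∈ closedNbhd G {v}}

/-- `P^∞(S)`, realized as `P^{|V|}(S)` on a finite vertex type. -/
def monitoredInf {V : Type*} (G : SimpleGraph V) (k : ℕ) (S : Set V) : Set V :=
  monitored G k S (Nat.card V)

/-- `S` is a k-power dominating set. -/
def IsKPDS {V : Type*} (G : SimpleGraph V) (k : ℕ) (S : Set V) : Prop :=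
  monitoredInf G k S = Set.univ

/-- The k-power domination number `γ_{p,k}(G)`. -/
noncomputable def powerDomNumber {V : Type*} (G : SimpleGraph V) (k : ℕ) : ℕ :=
  sInf {m | ∃ S : Set V, S.Finite ∧ S.ncard = m ∧ IsKPDS G k S}

/-- A k-fort: a nonempty set `F` such that every vertex of `N(F) \ F`
has at least `k+1` neighbors in `F`. -/
def IsKFort {V : Type*} (G : SimpleGraph V) (k : ℕ) (F : Set V) : Prop :=
  F.Nonempty ∧ ∀ v ∈ closedNbhd G F \ F, k + 1 ≤ (G.neighborSet v ∩ F).ncard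

/-- Claw-free: no induced `K_{1,3}`. -/
def ClawFree {V : Type*} (G : SimpleGraph V) : Prop :=
  ∀ u a b c : V, G.Adj u a → G.Adj u b → G.Adj u c → a ≠ b → a ≠ c → b ≠ c →
    G.Adj a b ∨ G.Adj a c ∨ G.Adj b c

/-- `r`-regular. -/
def RegularOfDegree {V : Type*} (G : SimpleGraph V) (r : ℕ) : Prop :=
  ∀ v : V, (G.neighborSet v).ncard = r

/-- The domination number `γ(G)`. -/
noncomputable def domNumber {V : Type*} (G : SimpleGraph V) : ℕ :=
  sInf {m | ∃ S : Set V, S.Finite ∧ S.ncard = m ∧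
    ∀ v : V, v ∈ S ∨ ∃ u ∈ S, G.Adj v u}

/-- The total domination number `γ_t(G)`. -/
noncomputable def totalDomNumber {V : Type*} (G : SimpleGraph V) : ℕ :=
  sInf {m | ∃ S : Set V, S.Finite ∧ S.ncard = m ∧ ∀ v : V, ∃ u ∈ S, G.Adj v u}

theorem kPDS_meets_closedNbhd_of_kFort {V : Type*} [Finite V] (G : SimpleGraph V) (k : ℕ)
    (hk : 1 ≤ k) (F S : Set V) (hF : IsKFort G k F) (hS : IsKPDS G k S) :
    (S ∩ closedNbhd G F).Nonempty := by
  by_contra h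
  rw [Set.not_nonempty_iff_eq_empty] at h
  obtain ⟨⟨f, hf⟩, hfort⟩ := hF
  have key : ∀ i, monitored G k S i ∩ F = ∅ := by
    intro i
    induction i with
    | zero =>
      ext w
      simp only [Set.mem_inter_iff, Set.mem_empty_iff_false, iff_false, not_and]
      intro hw hwF
      rcases hw with hs | ⟨u, hu, hadj⟩
      · have : w ∈ S ∩ closedNbhd G F := ⟨hs, Or.inl hwF⟩
        rw [h] at this; exact this
      · have : u ∈ S ∩ closedNbhd G F := ⟨hu, Or.inr ⟨w, hwF, hadj.symm⟩⟩
        rw [h] at this; exact this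
    | succ i ih =>
      ext w
      simp only [Set.mem_inter_iff, Set.mem_empty_iff_false, iff_false, not_and]
      rintro ⟨v, hv, hcard, hw⟩ hwF
      have hvF : v ∉ F := fun hvF => by
        have : v ∈ monitored G k S i ∩ F := ⟨hv, hvF⟩
        rw [ih] at this; exact this
      have hadj : G.Adj v w := by
        rcases hw with h1 | ⟨u, hu, hadj⟩
        · exact absurd (h1 ▸ hwF) hvF
        · rw [Set.mem_singleton_iff] at hu; exact hu ▸ hadj
      have hvN : v ∈ closedNbhd G F \ F := ⟨Or.inr ⟨w, hwF, hadj.symm⟩, hvF⟩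
      have hsub : G.neighborSet v ∩ F ⊆ closedNbhd G {v} \ monitored G k S i := by
        rintro x ⟨hx1, hx2⟩
        refine ⟨Or.inr ⟨v, rfl, hx1⟩, fun hx3 => ?_⟩
        have : x ∈ monitored G k S i ∩ F := ⟨hx3, hx2⟩
        rw [ih] at this; exact this
      have h1 := Set.ncard_le_ncard hsub (Set.toFinite _)
      have h2 := hfort v hvN
      omega
  have hfall : f ∈ monitoredInf G k S := by rw [hS]; trivial
  have hmem : f ∈ monitored G k S (Nat.card V) ∩ F := ⟨hfall, hf⟩
  rw [key] at hmem
  exact hmem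
end

section
/- If G is a connected (k+1)-regular graph with at least one vertex, then γ_{p,k}(G) = 1, i.e., any single vertex forms a k-power dominating set. -/
open SimpleGraph

section Proof

variable {V : Type*} [Finite V]

omit [Finite V] in
lemma mem_closedNbhd_self {G : SimpleGraph V} (v : V) : v ∈ closedNbhd G {v} :=
  Or.inl rfl

lemma helper_ncard {G : SimpleGraph V} {k : ℕ} (hreg : RegularOfDegree G (k + 1))
    {T : Set V} {u v : V} (hv : v ∈ T) (hu : u ∈ T) (huv : G.Adj u v) :
    (closedNbhd G {v} \ T).ncard ≤ k := by
  have hsub : closedNbhd G {v} \ T ⊆ G.neighborSet v \ {u} := by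
    rintro w ⟨hw, hwT⟩
    rcases hw with hw | ⟨x, hx, hadj⟩
    · exact absurd (hw ▸ hv) hwT
    · rcases hx with rfl
      refine ⟨hadj, ?_⟩
      rintro rfl
      exact hwT hu
  have h1 : (G.neighborSet v \ {u}).ncard = k := by
    rw [Set.ncard_diff_singleton_of_mem (G.mem_neighborSet v u |>.mpr huv.symm), hreg v]
    omega
  calc (closedNbhd G {v} \ T).ncard ≤ (G.neighborSet v \ {u}).ncard :=
        Set.ncard_le_ncard hsub (Set.toFinite _)
    _ = k := h1

lemma memB {G : SimpleGraph V} {k : ℕ} (hreg : RegularOfDegree G (k + 1)) (s : V) :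
    ∀ i, ∀ v ∈ monitored G k {s} i,
      (closedNbhd G {v} \ monitored G k {s} i).ncard ≤ k := by
  intro i
  induction i with
  | zero =>
    rintro v hv
    rcases hv with hv | ⟨x, hx, hadj⟩
    · rcases hv with rfl
      simp [monitored, Set.diff_self]
    · rcases hx with rfl
      exact helper_ncard hreg (Or.inr ⟨x, rfl, hadj⟩) (Or.inl rfl) hadj
  | succ i ih =>
    have hmono : monitored G k {s} i ⊆ monitored G k {s} (i + 1) := by
      intro v hv
      exact ⟨v, hv, ih v hv, mem_closedNbhd_self v⟩
    rintro v ⟨u, hu, hcond, hvNu⟩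
    by_cases hvi : v ∈ monitored G k {s} i
    · calc (closedNbhd G {v} \ monitored G k {s} (i + 1)).ncard
          ≤ (closedNbhd G {v} \ monitored G k {s} i).ncard :=
            Set.ncard_le_ncard (Set.diff_subset_diff_right hmono) (Set.toFinite _)
        _ ≤ k := ih v hvi
    · have hne : v ≠ u := by rintro rfl; exact hvi hu
      have hadj : G.Adj u v := by
        rcases hvNu with hv | ⟨x, hx, hadj⟩
        · exact absurd hv hne
        · rcases hx with rfl; exact hadj
      exact helper_ncard hreg ⟨u, hu, hcond, hvNu⟩ (hmono hu) hadj

lemma mono_monitored {G : SimpleGraph V} {k : ℕ} (hreg : RegularOfDegree G (k + 1)) (s : V)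
    (i : ℕ) : monitored G k {s} i ⊆ monitored G k {s} (i + 1) := by
  intro v hv
  exact ⟨v, hv, memB hreg s i v hv, mem_closedNbhd_self v⟩

lemma s_mem {G : SimpleGraph V} {k : ℕ} (hreg : RegularOfDegree G (k + 1)) (s : V) (i : ℕ) :
    s ∈ monitored G k {s} i := by
  induction i with
  | zero => exact Or.inl rfl
  | succ i ih => exact mono_monitored hreg s i ih

lemma card_grow {G : SimpleGraph V} {k : ℕ} (hconn : G.Connected)
    (hreg : RegularOfDegree G (k + 1)) (s : V) :
    ∀ i, monitored G k {s} i = Set.univ ∨ i + 1 ≤ (monitored G k {s} i).ncard := by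
  intro i
  induction i with
  | zero =>
    by_cases h : monitored G k {s} 0 = Set.univ
    · exact Or.inl h
    · right
      exact (Set.ncard_pos (Set.toFinite _)).mpr ⟨s, s_mem hreg s 0⟩
  | succ i ih =>
    by_cases h : monitored G k {s} i = Set.univ
    · left
      exact Set.eq_univ_of_univ_subset (h ▸ mono_monitored hreg s i)
    · rcases ih with h' | h'
      · exact absurd h' h
      by_cases h2 : monitored G k {s} (i + 1) = Set.univ
      · exact Or.inl h2
      right
      -- find a boundary vertex
      obtain ⟨t, ht⟩ : ∃ t, t ∉ monitored G k {s} i := by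
        by_contra hc
        push_neg at hc
        exact h (Set.eq_univ_of_forall hc)
      obtain ⟨d, _, hd1, hd2⟩ :=
        ((hconn s t).some).exists_boundary_dart (monitored G k {s} i) (s_mem hreg s i) ht
      have hdsnd : d.snd ∈ monitored G k {s} (i + 1) :=
        ⟨d.fst, hd1, memB hreg s i d.fst hd1, Or.inr ⟨d.fst, rfl, d.adj⟩⟩
      have hss : monitored G k {s} i ⊂ monitored G k {s} (i + 1) :=
        ⟨mono_monitored hreg s i, fun hsub => hd2 (by
          -- hsub : P(i+1) ⊆ P i, then d.snd ∈ P i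
          exact hsub hdsnd)⟩
      have := Set.ncard_lt_ncard hss (Set.toFinite _)
      omega

lemma single_isKPDS {G : SimpleGraph V} {k : ℕ} (hconn : G.Connected)
    (hreg : RegularOfDegree G (k + 1)) (s : V) : IsKPDS G k {s} := by
  rcases card_grow hconn hreg s (Nat.card V) with h | h
  · exact h
  · exfalso
    have h2 : (monitored G k {s} (Nat.card V)).ncard ≤ Nat.card V := by
      rw [← Set.ncard_univ]
      exact Set.ncard_le_ncard (Set.subset_univ _) (Set.toFinite _)
    omega

end Proof

theorem powerDomNumber_succ_regular {V : Type*} [Finite V] [Nonempty V]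
    (G : SimpleGraph V) (k : ℕ) (hconn : G.Connected)
    (hreg : RegularOfDegree G (k + 1)) :
    (∀ v : V, IsKPDS G k {v}) ∧ powerDomNumber G k = 1 := by
  have hall : ∀ v : V, IsKPDS G k {v} := fun v => single_isKPDS hconn hreg v
  refine ⟨hall, ?_⟩
  obtain ⟨v₀⟩ := ‹Nonempty V›
  have h1 : 1 ∈ {m | ∃ S : Set V, S.Finite ∧ S.ncard = m ∧ IsKPDS G k S} :=
    ⟨{v₀}, Set.finite_singleton v₀, Set.ncard_singleton v₀, hall v₀⟩
  have h0 : 0 ∉ {m | ∃ S : Set V, S.Finite ∧ S.ncard = m ∧ IsKPDS G k S} := by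
    rintro ⟨S, hSfin, hS0, hSpds⟩
    have hSempty : S = ∅ := (Set.ncard_eq_zero hSfin).mp hS0
    subst hSempty
    have hmon : ∀ i, monitored G k (∅ : Set V) i = ∅ := by
      intro i
      induction i with
      | zero =>
        ext w
        simp [monitored, closedNbhd]
      | succ i ih =>
        ext w
        simp [monitored, ih]
    have := hmon (Nat.card V)
    rw [IsKPDS, monitoredInf, this] at hSpds
    exact absurd (hSpds ▸ Set.mem_univ v₀) (Set.notMem_empty v₀)
  refine le_antisymm (Nat.sInf_le h1) ?_
  rw [Nat.one_le_iff_ne_zero]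
  intro hz
  rcases Nat.sInf_eq_zero.mp hz with h | h
  · exact h0 h
  · exact (h ▸ h1 : (1:ℕ) ∈ (∅ : Set ℕ))
end

section
/- Let H = G[N[L]] and H' = G[N[L']] be two L-configurations of a connected claw-free (k+l+1)-regular graph G with l ∈ {2,3}, k ≥ l, and G not isomorphic to K_{k+l+2}. If V(H) ∩ V(H') ≠ ∅, then V(H) = V(H'). -/
open SimpleGraph

/-!
Let `r ≤ 2k + 1` bound the degrees. A clique `A` disjoint from a `k`-fort `B` and containing a
vertex `a ∈ N(B)` has `|A| + k ≤ deg a`, since `a` sees `A \ {a}` and at least `k + 1` vertices of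
`B`; so `|A| ≤ k + 1`. If `L` and `L'` share a vertex `z` and `x ∈ N[L] \ N[L']`, then `x` together
with its `≥ k + 1` neighbours in `L` is such a clique for `B = L'`, too large. If `L` and `L'` are
disjoint, no vertex lies in both `N(L) \ L` and `N(L') \ L'`, so a common vertex of `N[L]` and
`N[L']` lies in one of the cliques, say in `L ∩ N(L')`; the bound then forces `|L| = |L'| = k + 1`,
every boundary vertex of one clique sees all of the other, and `L ∪ L'` is a clique of size
`2k + 2 > r`, which is therefore a whole component and equals both closed neighbourhoods.
-/

section LConfigurations

variable {V : Type*} {G : SimpleGraph V} {k : ℕ}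

lemma mem_closedNbhd_of_adj {S : Set V} {u v : V} (hu : u ∈ S) (h : G.Adj u v) :
    v ∈ closedNbhd G S :=
  Or.inr ⟨u, hu, h⟩

variable [Finite V]

lemma IsKFort.subset_neighborSet {B : Set V} {x : V} (hB : IsKFort G k B)
    (hcard : B.ncard ≤ k + 1) (hx : x ∈ closedNbhd G B \ B) : B ⊆ G.neighborSet x := by
  have h : G.neighborSet x ∩ B = B :=
    Set.eq_of_subset_of_ncard_le Set.inter_subset_right (hcard.trans (hB.2 x hx))
  exact h ▸ Set.inter_subset_left

lemma two_mul_add_two_le_ncard_neighborSet {B B' : Set V} {x : V} (hB : IsKFort G k B)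
    (hB' : IsKFort G k B') (hBB' : Disjoint B B') (hx : x ∈ closedNbhd G B \ B)
    (hx' : x ∈ closedNbhd G B' \ B') : 2 * k + 2 ≤ (G.neighborSet x).ncard := by
  have h : (G.neighborSet x ∩ B ∪ G.neighborSet x ∩ B').ncard ≤ (G.neighborSet x).ncard :=
    Set.ncard_le_ncard (Set.union_subset Set.inter_subset_left Set.inter_subset_left)
  rw [Set.ncard_union_eq (hBB'.mono Set.inter_subset_right Set.inter_subset_right)] at h
  have := hB.2 x hx
  have := hB'.2 x hx'
  omega

lemma SimpleGraph.IsClique.ncard_add_le_ncard_neighborSet {A B : Set V} {a : V}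
    (hA : G.IsClique A) (hB : IsKFort G k B) (hAB : Disjoint A B) (ha : a ∈ A)
    (haB : a ∈ closedNbhd G B) : A.ncard + k ≤ (G.neighborSet a).ncard := by
  have hsub : A \ {a} ∪ (G.neighborSet a ∩ B) ⊆ G.neighborSet a :=
    Set.union_subset (fun u hu => hA ha hu.1 (Ne.symm hu.2)) Set.inter_subset_left
  have h := Set.ncard_le_ncard hsub
  rw [Set.ncard_union_eq (hAB.mono Set.sdiff_subset Set.inter_subset_right)] at h
  have := Set.ncard_sdiff_singleton_add_one ha
  have := hB.2 a ⟨haB, Set.disjoint_left.mp hAB ha⟩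
  omega

lemma closedNbhd_eq_of_isClique {C S : Set V} (hC : G.IsClique C)
    (hdeg : ∀ v ∈ C, (G.neighborSet v).ncard + 1 ≤ C.ncard) (hSC : S ⊆ C) (hS : S.Nonempty) :
    closedNbhd G S = C := by
  have hN : ∀ v ∈ C, G.neighborSet v ⊆ C := by
    intro v hv
    have hsub : C \ {v} ⊆ G.neighborSet v := fun u hu => hC hv hu.1 (Ne.symm hu.2)
    have h : C \ {v} = G.neighborSet v := Set.eq_of_subset_of_ncard_le hsub (by
      have := Set.ncard_sdiff_singleton_add_one hv
      have := hdeg v hv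
      omega)
    exact h ▸ Set.sdiff_subset
  apply subset_antisymm
  · rintro y (hy | ⟨s, hs, hsy⟩)
    · exact hSC hy
    · exact hN s (hSC hs) hsy
  · intro c hc
    by_cases hcS : c ∈ S
    · exact Or.inl hcS
    · obtain ⟨s, hs⟩ := hS
      exact mem_closedNbhd_of_adj hs (hC (hSC hs) hc (ne_of_mem_of_not_mem hs hcS))

lemma closedNbhd_subset_of_mem_inter (hdeg : ∀ v, (G.neighborSet v).ncard ≤ 2 * k + 1)
    {L L' : Set V} {z : V} (hL : G.IsClique L)
    (hLf : IsKFort G k L) (hL'f : IsKFort G k L') (hzL : z ∈ L) (hzL' : z ∈ L') :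
    closedNbhd G L ⊆ closedNbhd G L' := by
  intro x hx
  by_contra hx'
  have hxL' : x ∉ L' := fun h => hx' (Or.inl h)
  have hx_nadj : ∀ u ∈ L', ¬ G.Adj u x := fun u hu h => hx' (mem_closedNbhd_of_adj hu h)
  have hxL : x ∉ L := fun h => hx_nadj z hzL' (hL hzL h (ne_of_mem_of_not_mem hzL' hxL'))
  have hx_nbrs : k + 1 ≤ (G.neighborSet x ∩ L).ncard := hLf.2 x ⟨hx, hxL⟩
  obtain ⟨w, hxw, hwL⟩ : (G.neighborSet x ∩ L).Nonempty :=
    Set.nonempty_of_ncard_ne_zero (by omega)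
  have hwL' : w ∉ L' := fun h => hx_nadj w h hxw.symm
  have hw : w ∈ closedNbhd G L' :=
    mem_closedNbhd_of_adj hzL' (hL hzL hwL (ne_of_mem_of_not_mem hzL' hwL'))
  have hK : G.IsClique (insert x (G.neighborSet x ∩ L)) :=
    (hL.subset Set.inter_subset_right).insert fun u hu _ => hu.1
  have hKL' : Disjoint (insert x (G.neighborSet x ∩ L)) L' :=
    Set.disjoint_insert_left.mpr
      ⟨hxL', Set.disjoint_left.mpr fun u hu huL' => hx_nadj u huL' hu.1.symm⟩
  have hKw := hK.ncard_add_le_ncard_neighborSet hL'f hKL' (Set.mem_insert_of_mem _ ⟨hxw, hwL⟩) hw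
  rw [Set.ncard_insert_of_notMem fun h => hxL h.2] at hKw
  have := hdeg w
  omega

lemma closedNbhd_eq_of_disjoint (hdeg : ∀ v, (G.neighborSet v).ncard ≤ 2 * k + 1)
    {L L' : Set V} {w : V} (hL : G.IsClique L)
    (hLf : IsKFort G k L) (hL' : G.IsClique L') (hL'f : IsKFort G k L') (hdisj : Disjoint L L')
    (hwL : w ∈ L) (hwL' : w ∈ closedNbhd G L') :
    closedNbhd G L = closedNbhd G L' := by
  have hwb : w ∈ closedNbhd G L' \ L' := ⟨hwL', Set.disjoint_left.mp hdisj hwL⟩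
  have hw_nbrs : k + 1 ≤ (G.neighborSet w ∩ L').ncard := hL'f.2 w hwb
  obtain ⟨q, hwq, hqL'⟩ : (G.neighborSet w ∩ L').Nonempty :=
    Set.nonempty_of_ncard_ne_zero (by omega)
  have hqb : q ∈ closedNbhd G L \ L :=
    ⟨mem_closedNbhd_of_adj hwL hwq, Set.disjoint_right.mp hdisj hqL'⟩
  have hq_nbrs : k + 1 ≤ (G.neighborSet q ∩ L).ncard := hLf.2 q hqb
  have hLcard : L.ncard = k + 1 := by
    have := hL.ncard_add_le_ncard_neighborSet hL'f hdisj hwL hwL'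
    have := Set.ncard_le_ncard (Set.inter_subset_right (s := G.neighborSet q) (t := L))
    have := hdeg w
    omega
  have hL'card : L'.ncard = k + 1 := by
    have := hL'.ncard_add_le_ncard_neighborSet hLf hdisj.symm hqL' hqb.1
    have := Set.ncard_le_ncard (Set.inter_subset_right (s := G.neighborSet w) (t := L'))
    have := hdeg q
    omega
  have hjoin : ∀ p ∈ L', L ⊆ G.neighborSet p := fun p hp =>
    hLf.subset_neighborSet hLcard.le
      ⟨mem_closedNbhd_of_adj hwL (hL'f.subset_neighborSet hL'card.le hwb hp),
        Set.disjoint_right.mp hdisj hp⟩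
  have hC : G.IsClique (L ∪ L') :=
    Set.pairwise_union.mpr
      ⟨hL, hL', fun a ha b hb _ => ⟨(hjoin b hb ha).symm, hjoin b hb ha⟩⟩
  have hCdeg : ∀ v ∈ L ∪ L', (G.neighborSet v).ncard + 1 ≤ (L ∪ L').ncard := fun v _ => by
    rw [Set.ncard_union_eq hdisj, hLcard, hL'card]
    have := hdeg v
    omega
  rw [closedNbhd_eq_of_isClique hC hCdeg Set.subset_union_left ⟨w, hwL⟩,
    closedNbhd_eq_of_isClique hC hCdeg Set.subset_union_right ⟨q, hqL'⟩]

end LConfigurations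

theorem Lconfigs_eq_of_inter_nonempty_general {V : Type*} [Finite V] (G : SimpleGraph V)
    (k l : ℕ) (hk : l ≤ k) (hreg : RegularOfDegree G (k + l + 1))
    (L L' : Set V) (hLclique : G.IsClique L) (hLfort : IsKFort G k L)
    (hL'clique : G.IsClique L') (hL'fort : IsKFort G k L')
    (hint : (closedNbhd G L ∩ closedNbhd G L').Nonempty) :
    closedNbhd G L = closedNbhd G L' := by
  have hdeg : ∀ v, (G.neighborSet v).ncard ≤ 2 * k + 1 := fun v => by
    rw [hreg v]
    omega
  obtain ⟨w, hw, hw'⟩ := hint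
  by_cases hLL' : (L ∩ L').Nonempty
  · obtain ⟨z, hzL, hzL'⟩ := hLL'
    exact subset_antisymm
      (closedNbhd_subset_of_mem_inter hdeg hLclique hLfort hL'fort hzL hzL')
      (closedNbhd_subset_of_mem_inter hdeg hL'clique hL'fort hLfort hzL' hzL)
  have hdisj : Disjoint L L' := Set.disjoint_iff_inter_eq_empty.mpr
    (Set.not_nonempty_iff_eq_empty.mp hLL')
  by_cases hwL : w ∈ L
  · exact closedNbhd_eq_of_disjoint hdeg hLclique hLfort hL'clique hL'fort hdisj hwL hw'
  by_cases hwL' : w ∈ L'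
  · exact (closedNbhd_eq_of_disjoint hdeg hL'clique hL'fort hLclique hLfort hdisj.symm
      hwL' hw).symm
  have := two_mul_add_two_le_ncard_neighborSet hLfort hL'fort hdisj ⟨hw, hwL⟩ ⟨hw', hwL'⟩
  have := hdeg w
  omega

theorem Lconfigs_eq_of_inter_nonempty {V : Type*} [Finite V] (G : SimpleGraph V)
    (k l : ℕ) (hl : l = 2 ∨ l = 3) (hk : l ≤ k) (hconn : G.Connected)
    (hcf : ClawFree G) (hreg : RegularOfDegree G (k + l + 1))
    (hnc : ¬ Nonempty (G ≃g (⊤ : SimpleGraph (Fin (k + l + 2)))))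
    (L L' : Set V) (hLclique : G.IsClique L) (hLfort : IsKFort G k L)
    (hL'clique : G.IsClique L') (hL'fort : IsKFort G k L')
    (hint : (closedNbhd G L ∩ closedNbhd G L').Nonempty) :
    closedNbhd G L = closedNbhd G L' :=
  Lconfigs_eq_of_inter_nonempty_general G k l hk hreg L L' hLclique hLfort hL'clique hL'fort hint
end

section
/- Let G be a connected claw-free (k+l+1)-regular graph with l ≤ k, and let H = G[N[L]] be an L-configuration of G. Then for each vertex u ∈ L, V(H) ⊆ P^∞({u}), i.e., the single vertex u monitors all of H under k-power domination propagation. -/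
open SimpleGraph

/-!
Since `L` is a clique, `L ⊆ N[u] = P⁰({u})`. If `|L| ≤ k + 1`, the fort condition forces every
vertex of `N(L) \ L` to be adjacent to all of `L`, so already `N[L] ⊆ N[u]`. Otherwise every
`v ∈ L` has only `(k + l + 1) - (|L| - 1) ≤ l ≤ k` neighbours outside `L`, and these are the only
unmonitored vertices of `N[v]`, so `v` monitors its whole neighbourhood in one step. Either way
`N[L] ⊆ P¹({u}) ⊆ P^∞({u})`.
-/

section

variable {V : Type*} {G : SimpleGraph V}

lemma subset_closedNbhd (S : Set V) : S ⊆ closedNbhd G S := Set.subset_union_left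

lemma closedNbhd_mono {S T : Set V} (h : S ⊆ T) : closedNbhd G S ⊆ closedNbhd G T :=
  Set.union_subset_union h fun _ ⟨s, hs, hadj⟩ => ⟨s, h hs, hadj⟩

lemma closedNbhd_singleton (v : V) : closedNbhd G {v} = insert v (G.neighborSet v) := by
  ext w
  simp [closedNbhd]

lemma mem_closedNbhd_iff {S : Set V} {w : V} :
    w ∈ closedNbhd G S ↔ ∃ v ∈ S, w ∈ closedNbhd G {v} := by
  simp only [closedNbhd_singleton, Set.mem_insert_iff, mem_neighborSet]
  constructor
  · rintro (hw | ⟨v, hv, hadj⟩)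
    exacts [⟨w, hw, Or.inl rfl⟩, ⟨v, hv, Or.inr hadj⟩]
  · rintro ⟨v, hv, rfl | hadj⟩
    exacts [Or.inl hv, Or.inr ⟨v, hv, hadj⟩]

lemma SimpleGraph.IsClique.subset_closedNbhd_singleton {L : Set V} (hL : G.IsClique L) {u : V}
    (hu : u ∈ L) : L ⊆ closedNbhd G {u} := by
  intro v hv
  rw [closedNbhd_singleton]
  rcases eq_or_ne u v with rfl | huv
  exacts [Set.mem_insert u _, Or.inr (hL hu hv huv)]

lemma SimpleGraph.IsClique.ncard_neighborSet_diff_add_ncard [Finite V] {L : Set V}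
    (hL : G.IsClique L) {v : V} (hv : v ∈ L) :
    (G.neighborSet v \ L).ncard + L.ncard = (G.neighborSet v).ncard + 1 := by
  have hsplit : closedNbhd G {v} = (G.neighborSet v \ L) ∪ L := by
    rw [← Set.insert_sdiff_of_mem _ hv, ← closedNbhd_singleton, Set.sdiff_union_self,
      Set.union_eq_left.2 (hL.subset_closedNbhd_singleton hv)]
  rw [← Set.ncard_union_eq Set.disjoint_sdiff_left, ← hsplit, closedNbhd_singleton,
    Set.ncard_insert_of_notMem G.notMem_neighborSet_self]

section Monitoring

variable {k : ℕ} {S : Set V}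

lemma closedNbhd_singleton_subset_monitored_succ {i : ℕ} {v : V} (hv : v ∈ monitored G k S i)
    (hk : (closedNbhd G {v} \ monitored G k S i).ncard ≤ k) :
    closedNbhd G {v} ⊆ monitored G k S (i + 1) :=
  fun _ hw => ⟨v, hv, hk, hw⟩

lemma monitored_subset_succ [Finite V] (i : ℕ) :
    monitored G k S i ⊆ monitored G k S (i + 1) := by
  induction i with
  | zero =>
    intro w hw
    obtain ⟨s, hs, hws⟩ := mem_closedNbhd_iff.1 hw
    refine closedNbhd_singleton_subset_monitored_succ (subset_closedNbhd S hs) ?_ hws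
    rw [monitored, Set.sdiff_eq_empty.2 (closedNbhd_mono (Set.singleton_subset_iff.2 hs)),
      Set.ncard_empty]
    exact Nat.zero_le k
  | succ i ih =>
    rintro w ⟨v, hv, hk, hw⟩
    exact ⟨v, ih hv,
      (Set.ncard_le_ncard (Set.sdiff_subset_sdiff_right ih) (Set.toFinite _)).trans hk, hw⟩

lemma monitored_mono [Finite V] : Monotone (monitored G k S) :=
  monotone_nat_of_le_succ monitored_subset_succ

lemma monitored_subset_monitoredInf [Finite V] {i : ℕ} (hi : i ≤ Nat.card V) :
    monitored G k S i ⊆ monitoredInf G k S :=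
  monitored_mono hi

end Monitoring

lemma IsKFort.closedNbhd_subset_closedNbhd_singleton {k : ℕ} {L : Set V} (hfort : IsKFort G k L)
    (hclique : G.IsClique L) (hfin : L.Finite) (hcard : L.ncard ≤ k + 1) {u : V} (hu : u ∈ L) :
    closedNbhd G L ⊆ closedNbhd G {u} := by
  intro w hw
  by_cases hwL : w ∈ L
  · exact hclique.subset_closedNbhd_singleton hu hwL
  have hall : G.neighborSet w ∩ L = L :=
    Set.eq_of_subset_of_ncard_le Set.inter_subset_right (hcard.trans (hfort.2 w ⟨hw, hwL⟩)) hfin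
  have hwu : G.Adj w u := (hall.symm ▸ hu : u ∈ G.neighborSet w ∩ L).1
  rw [closedNbhd_singleton]
  exact Or.inr hwu.symm

lemma SimpleGraph.IsClique.closedNbhd_subset_monitored_one [Finite V] {k l : ℕ} (hl : l ≤ k)
    (hreg : RegularOfDegree G (k + l + 1)) {L : Set V} (hclique : G.IsClique L)
    (hfort : IsKFort G k L) {u : V} (hu : u ∈ L) :
    closedNbhd G L ⊆ monitored G k {u} 1 := by
  have hLu : L ⊆ monitored G k {u} 0 := hclique.subset_closedNbhd_singleton hu
  rcases le_or_gt L.ncard (k + 1) with hsmall | hlarge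
  · exact (hfort.closedNbhd_subset_closedNbhd_singleton hclique L.toFinite hsmall hu).trans
      (monitored_subset_succ 0)
  intro w hw
  obtain ⟨v, hv, hwv⟩ := mem_closedNbhd_iff.1 hw
  refine closedNbhd_singleton_subset_monitored_succ (hLu hv) ?_ hwv
  have hunmonitored : closedNbhd G {v} \ monitored G k {u} 0 ⊆ G.neighborSet v \ L := by
    rw [closedNbhd_singleton, Set.insert_sdiff_of_mem _ (hLu hv)]
    exact Set.sdiff_subset_sdiff_right hLu
  have hcount := hclique.ncard_neighborSet_diff_add_ncard hv
  rw [hreg v] at hcount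
  calc _ ≤ (G.neighborSet v \ L).ncard := Set.ncard_le_ncard hunmonitored (Set.toFinite _)
    _ ≤ k := by omega

end

theorem Lconfig_monitored_by_single_vertex_general {V : Type*} [Finite V] (G : SimpleGraph V)
    (k l : ℕ) (hl : l ≤ k)
    (hreg : RegularOfDegree G (k + l + 1))
    (L : Set V) (hLclique : G.IsClique L) (hLfort : IsKFort G k L)
    (u : V) (hu : u ∈ L) :
    closedNbhd G L ⊆ monitoredInf G k {u} := by
  have : Nonempty V := ⟨u⟩
  exact (hLclique.closedNbhd_subset_monitored_one hl hreg hLfort hu).trans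
    (monitored_subset_monitoredInf Nat.card_pos)

theorem Lconfig_monitored_by_single_vertex {V : Type*} [Finite V] (G : SimpleGraph V)
    (k l : ℕ) (hl : l ≤ k) (hconn : G.Connected) (hcf : ClawFree G)
    (hreg : RegularOfDegree G (k + l + 1))
    (L : Set V) (hLclique : G.IsClique L) (hLfort : IsKFort G k L)
    (u : V) (hu : u ∈ L) :
    closedNbhd G L ⊆ monitoredInf G k {u} :=
  Lconfig_monitored_by_single_vertex_general G k l hl hreg L hLclique hLfort u hu
end

section
/- For each r ≥ 4 and q ≥ 2, the graph D_{r,q} (a cycle of q copies of K_{r,r} minus a perfect-matching edge x_iy_i, linked by edges y_i x_{i+1}) is a connected r-regular graph on n = 2qr vertices with γ_{p,r−3}(D_{r,q}) = 2q = n/r. In particular, γ_{p,r−3}(D_{r,q}) > n/(r+1). -/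
open SimpleGraph

/-- The graph `D_{r,q}`: a cycle of `q` copies of `K_{r,r}` minus a matching edge
`x_i y_i`, linked by edges `y_i x_{i+1}`.  Vertices are pairs: the copy index and
either a left-side (`Sum.inl`) or right-side (`Sum.inr`) vertex; `x_i = (i, inl 0)`,
`y_i = (i, inr 0)`. -/
def Dgraph (r q : ℕ) [NeZero r] [NeZero q] :
    SimpleGraph (Fin q × (Fin r ⊕ Fin r)) :=
  SimpleGraph.fromRel (fun p p' =>
    (p.1 = p'.1 ∧ ∃ a b, p.2 = Sum.inl a ∧ p'.2 = Sum.inr b ∧ ¬(a = 0 ∧ b = 0)) ∨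
    (p'.1 = p.1 + 1 ∧ p.2 = Sum.inr 0 ∧ p'.2 = Sum.inl 0))

/-!
The `2q` vertices `x_i, y_i` dominate `D_{r,q}`, so they form an `(r-3)`-power dominating set.
Conversely, on either side of copy `i`, the vertices other than the matched one (`x_i` or `y_i`)
and one further vertex `v` form an `(r-3)`-fort: its only outside neighbours are the vertices of
the other side of copy `i`, each adjacent to all `r - 2` of its vertices. A power dominating set
meets the closed neighbourhood of every fort, and this neighbourhood lies in copy `i` and misses
`v`. Taking first any such fort, then the one avoiding the vertex found, gives two vertices of
the set in every copy.
-/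

section PowerDomination
variable {V : Type*} {G : SimpleGraph V} {k : ℕ}

lemma IsKPDS.of_closedNbhd_eq_univ {S : Set V} (h : closedNbhd G S = Set.univ) :
    IsKPDS G k S := by
  suffices ∀ n, monitored G k S n = Set.univ from this _
  intro n
  induction n with
  | zero => exact h
  | succ n ih =>
    refine Set.eq_univ_of_forall fun w => ⟨w, ih ▸ trivial, ?_, Or.inl rfl⟩
    simp [ih]

-- A vertex of `N(F) \ F` has at least `k + 1` unmonitored neighbours in `F`, so it never propagates.
lemma disjoint_monitored_of_isKFort [Finite V] {S F : Set V} (hF : IsKFort G k F)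
    (hSF : Disjoint S (closedNbhd G F)) (n : ℕ) : Disjoint (monitored G k S n) F := by
  induction n with
  | zero =>
    rw [Set.disjoint_left]
    rintro w (hw | ⟨u, hu, huw⟩) hwF
    · exact Set.disjoint_left.mp hSF hw (Or.inl hwF)
    · exact Set.disjoint_left.mp hSF hu (Or.inr ⟨w, hwF, huw.symm⟩)
  | succ n ih =>
    rw [Set.disjoint_left]
    rintro w ⟨v, hv, hcard, hw⟩ hwF
    obtain rfl | ⟨u, hu, hvw⟩ := hw
    · exact Set.disjoint_left.mp ih hv hwF
    · rw [Set.mem_singleton_iff] at hu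
      subst u
      have hvF : v ∉ F := Set.disjoint_left.mp ih hv
      have hsub : G.neighborSet v ∩ F ⊆ closedNbhd G {v} \ monitored G k S n :=
        fun x ⟨hvx, hxF⟩ => ⟨Or.inr ⟨v, rfl, hvx⟩, Set.disjoint_right.mp ih hxF⟩
      have := (hF.2 v ⟨Or.inr ⟨w, hwF, hvw.symm⟩, hvF⟩).trans (Set.ncard_le_ncard hsub)
      omega

lemma IsKPDS.inter_closedNbhd_nonempty [Finite V] {S F : Set V} (hS : IsKPDS G k S)
    (hF : IsKFort G k F) : (S ∩ closedNbhd G F).Nonempty := by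
  rw [← Set.not_disjoint_iff_nonempty_inter]
  intro hSF
  obtain ⟨x, hx⟩ := hF.1
  have hx' : x ∈ monitoredInf G k S := hS ▸ Set.mem_univ x
  exact Set.disjoint_left.mp (disjoint_monitored_of_isKFort hF hSF _) hx' hx

lemma isKFort_of_forall_adj [Finite V] {F : Set V} (hcard : k + 1 ≤ F.ncard)
    (hadj : ∀ u ∈ F, ∀ v ∉ F, G.Adj u v → ∀ w ∈ F, G.Adj v w) : IsKFort G k F := by
  refine ⟨Set.nonempty_of_ncard_ne_zero (by omega), ?_⟩
  rintro v ⟨hv | ⟨u, hu, huv⟩, hvF⟩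
  · exact absurd hv hvF
  · have hsub : F ⊆ G.neighborSet v ∩ F := fun w hw => ⟨hadj u hu v hvF huv w hw, hw⟩
    exact hcard.trans (Set.ncard_le_ncard hsub (Set.toFinite _))

lemma powerDomNumber_eq {m : ℕ} (hS : ∃ S : Set V, S.Finite ∧ S.ncard = m ∧ IsKPDS G k S)
    (hle : ∀ S : Set V, S.Finite → IsKPDS G k S → m ≤ S.ncard) : powerDomNumber G k = m :=
  IsLeast.csInf_eq ⟨hS, by rintro _ ⟨S, hSfin, rfl, hS⟩; exact hle S hSfin hS⟩

end PowerDomination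

lemma two_mul_card_le_ncard {α ι : Type*} [Fintype ι] {S : Set α} (hS : S.Finite) (f : α → ι)
    (h : ∀ i, ∃ x ∈ S, ∃ y ∈ S, x ≠ y ∧ f x = i ∧ f y = i) : 2 * Fintype.card ι ≤ S.ncard := by
  choose x hxS y hyS hxy hx hy using h
  have hinj : (Sum.elim x y).Injective := by
    rintro (i | i) (j | j) h <;> simp only [Sum.elim_inl, Sum.elim_inr] at h
    · rw [← hx i, ← hx j, h]
    · obtain rfl : i = j := by rw [← hx i, ← hy j, h]
      exact absurd h (hxy i)
    · obtain rfl : i = j := by rw [← hy i, ← hx j, h]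
      exact absurd h.symm (hxy i)
    · rw [← hy i, ← hy j, h]
  calc 2 * Fintype.card ι = (Set.range (Sum.elim x y)).ncard := by
        rw [Set.ncard_range_of_injective hinj, Nat.card_sum, Nat.card_eq_fintype_card]; ring
    _ ≤ S.ncard := Set.ncard_le_ncard (Set.range_subset_iff.mpr (by rintro (i | i) <;> simp [*])) hS

namespace Dgraph
variable {r q : ℕ}

lemma mk_inl_injective (i : Fin q) :
    (fun a : Fin r => ((i, .inl a) : Fin q × (Fin r ⊕ Fin r))).Injective :=
  (Prod.mk_right_injective i).comp Sum.inl_injective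

lemma mk_inr_injective (i : Fin q) :
    (fun b : Fin r => ((i, .inr b) : Fin q × (Fin r ⊕ Fin r))).Injective :=
  (Prod.mk_right_injective i).comp Sum.inr_injective

variable [NeZero r]

def copyFort (i : Fin q) : Fin r ⊕ Fin r → Set (Fin q × (Fin r ⊕ Fin r))
  | .inl c => (fun a => (i, .inl a)) '' {0, c}ᶜ
  | .inr c => (fun b => (i, .inr b)) '' {0, c}ᶜ

lemma le_ncard_copyFort (i : Fin q) (β : Fin r ⊕ Fin r) : r - 2 ≤ (copyFort i β).ncard := by
  have hcompl (c : Fin r) : r - 2 ≤ ({0, c}ᶜ : Set (Fin r)).ncard := by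
    rw [Set.ncard_compl, Nat.card_eq_fintype_card, Fintype.card_fin]
    have := Set.ncard_insert_le (0 : Fin r) {c}
    rw [Set.ncard_singleton] at this
    omega
  obtain c | c := β
  · rw [copyFort, Set.ncard_image_of_injective _ (mk_inl_injective i)]
    exact hcompl c
  · rw [copyFort, Set.ncard_image_of_injective _ (mk_inr_injective i)]
    exact hcompl c

variable [NeZero q] {i j : Fin q} {a b : Fin r}

@[simp]
lemma adj_inl_inl : ¬(Dgraph r q).Adj (i, .inl a) (j, .inl b) := by
  simp [Dgraph]

@[simp]
lemma adj_inr_inr : ¬(Dgraph r q).Adj (i, .inr a) (j, .inr b) := by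
  simp [Dgraph]

lemma adj_inl_inr :
    (Dgraph r q).Adj (i, .inl a) (j, .inr b) ↔
      i = j ∧ ¬(a = 0 ∧ b = 0) ∨ a = 0 ∧ b = 0 ∧ i = j + 1 := by
  simp only [Dgraph, fromRel_adj]
  aesop

lemma adj_inr_inl :
    (Dgraph r q).Adj (i, .inr b) (j, .inl a) ↔
      j = i ∧ ¬(a = 0 ∧ b = 0) ∨ a = 0 ∧ b = 0 ∧ j = i + 1 := by
  rw [adj_comm, adj_inl_inr]

lemma neighborSet_inl_of_ne_zero (ha : a ≠ 0) :
    (Dgraph r q).neighborSet (i, .inl a) = Set.range fun b => (i, .inr b) := by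
  ext ⟨j, b | b⟩ <;> simp [adj_inl_inr, ha, eq_comm]

lemma neighborSet_inr_of_ne_zero (hb : b ≠ 0) :
    (Dgraph r q).neighborSet (i, .inr b) = Set.range fun a => (i, .inl a) := by
  ext ⟨j, a | a⟩ <;> simp [adj_inr_inl, hb, eq_comm]

lemma neighborSet_inl_zero :
    (Dgraph r q).neighborSet (i, .inl 0) =
      insert (i - 1, .inr 0) ((fun b => (i, .inr b)) '' {0}ᶜ) := by
  ext ⟨j, b | b⟩ <;> aesop (add simp [adj_inl_inr, eq_sub_iff_add_eq])

lemma neighborSet_inr_zero :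
    (Dgraph r q).neighborSet (i, .inr 0) =
      insert (i + 1, .inl 0) ((fun a => (i, .inl a)) '' {0}ᶜ) := by
  ext ⟨j, a | a⟩ <;> aesop (add simp adj_inr_inl)

lemma regularOfDegree : RegularOfDegree (Dgraph r q) r := by
  have hcompl : ({0}ᶜ : Set (Fin r)).ncard + 1 = r := by
    rw [Set.ncard_compl, Set.ncard_singleton, Nat.card_eq_fintype_card, Fintype.card_fin]
    exact Nat.sub_add_cancel NeZero.one_le
  rintro ⟨i, a | b⟩
  · obtain rfl | ha := eq_or_ne a 0
    · rw [neighborSet_inl_zero, Set.ncard_insert_of_notMem (by simp),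
        Set.ncard_image_of_injective _ (mk_inr_injective i), hcompl]
    · simp [neighborSet_inl_of_ne_zero ha, Set.ncard_range_of_injective (mk_inr_injective i)]
  · obtain rfl | hb := eq_or_ne b 0
    · rw [neighborSet_inr_zero, Set.ncard_insert_of_notMem (by simp),
        Set.ncard_image_of_injective _ (mk_inl_injective i), hcompl]
    · simp [neighborSet_inr_of_ne_zero hb, Set.ncard_range_of_injective (mk_inl_injective i)]

lemma reachable_inl_zero (hr : 2 ≤ r) (i : Fin q) (β : Fin r ⊕ Fin r) :
    (Dgraph r q).Reachable (i, .inl 0) (i, β) := by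
  let one : Fin r := ⟨1, hr⟩
  have hone : one ≠ 0 := Fin.ne_of_val_ne one_ne_zero
  have hleft (a : Fin r) : (Dgraph r q).Reachable (i, .inl 0) (i, .inl a) :=
    (adj_inl_inr.mpr (.inl ⟨rfl, fun h => hone h.2⟩)).reachable.trans
      (adj_inr_inl.mpr (.inl ⟨rfl, fun h => hone h.2⟩)).reachable
  obtain a | b := β
  · exact hleft a
  · exact (hleft one).trans (adj_inl_inr.mpr (.inl ⟨rfl, fun h => hone h.1⟩)).reachable

open Fin.NatCast in
lemma connected (hr : 2 ≤ r) : (Dgraph r q).Connected := by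
  have hcopy (i : Fin q) : (Dgraph r q).Reachable (0, .inl 0) (i, .inl 0) := by
    rw [← Fin.cast_val_eq_self i]
    induction (i : ℕ) with
    | zero => simp
    | succ n ih =>
      rw [Nat.cast_succ]
      exact ih.trans ((reachable_inl_zero hr _ _).trans
        (adj_inr_inl.mpr (.inr ⟨rfl, rfl, rfl⟩)).reachable)
  have hroot (v : Fin q × (Fin r ⊕ Fin r)) : (Dgraph r q).Reachable (0, .inl 0) v := by
    obtain ⟨i, β⟩ := v
    exact (hcopy i).trans (reachable_inl_zero hr i β)
  exact (connected_iff _).mpr ⟨fun u v => (hroot u).symm.trans (hroot v), ⟨(0, .inl 0)⟩⟩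

lemma closedNbhd_copyFort_subset (i : Fin q) (β : Fin r ⊕ Fin r) :
    closedNbhd (Dgraph r q) (copyFort i β) ⊆ {p | p.1 = i ∧ p ≠ (i, β)} := by
  obtain c | c := β
  · rintro _ (⟨a, ha, rfl⟩ | ⟨_, ⟨a, ha, rfl⟩, hadj⟩)
    · simp_all
    · rw [← mem_neighborSet, neighborSet_inl_of_ne_zero (by simp_all)] at hadj
      obtain ⟨b, rfl⟩ := hadj
      simp
  · rintro _ (⟨b, hb, rfl⟩ | ⟨_, ⟨b, hb, rfl⟩, hadj⟩)
    · simp_all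
    · rw [← mem_neighborSet, neighborSet_inr_of_ne_zero (by simp_all)] at hadj
      obtain ⟨a, rfl⟩ := hadj
      simp

lemma isKFort_copyFort (hr : 3 ≤ r) (i : Fin q) (β : Fin r ⊕ Fin r) :
    IsKFort (Dgraph r q) (r - 3) (copyFort i β) := by
  refine isKFort_of_forall_adj ((le_ncard_copyFort i β).trans' (by omega)) ?_
  obtain c | c := β
  · rintro _ ⟨a, ha, rfl⟩ v - hadj _ ⟨a', ha', rfl⟩
    rw [← mem_neighborSet, neighborSet_inl_of_ne_zero (by simp_all)] at hadj
    obtain ⟨b, rfl⟩ := hadj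
    rw [adj_comm, ← mem_neighborSet, neighborSet_inl_of_ne_zero (by simp_all)]
    exact ⟨b, rfl⟩
  · rintro _ ⟨b, hb, rfl⟩ v - hadj _ ⟨b', hb', rfl⟩
    rw [← mem_neighborSet, neighborSet_inr_of_ne_zero (by simp_all)] at hadj
    obtain ⟨a, rfl⟩ := hadj
    rw [adj_comm, ← mem_neighborSet, neighborSet_inr_of_ne_zero (by simp_all)]
    exact ⟨a, rfl⟩

lemma exists_ne_mem_copy_of_isKPDS (hr : 3 ≤ r) {S : Set (Fin q × (Fin r ⊕ Fin r))}
    (hS : IsKPDS (Dgraph r q) (r - 3) S) (i : Fin q) :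
    ∃ x ∈ S, ∃ y ∈ S, x ≠ y ∧ x.1 = i ∧ y.1 = i := by
  obtain ⟨⟨j, β⟩, hxS, hx⟩ := hS.inter_closedNbhd_nonempty (isKFort_copyFort hr i (.inl 0))
  obtain ⟨rfl, -⟩ := closedNbhd_copyFort_subset _ _ hx
  obtain ⟨y, hyS, hy⟩ := hS.inter_closedNbhd_nonempty (isKFort_copyFort hr j β)
  obtain ⟨hyj, hne⟩ := closedNbhd_copyFort_subset _ _ hy
  exact ⟨(j, β), hxS, y, hyS, hne.symm, rfl, hyj⟩

lemma isKPDS_prod_zero (k : ℕ) :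
    IsKPDS (Dgraph r q) k (Set.univ ×ˢ {.inl 0, .inr 0}) := by
  refine .of_closedNbhd_eq_univ (Set.eq_univ_of_forall ?_)
  rintro ⟨i, a | b⟩
  · obtain rfl | ha := eq_or_ne a 0
    · exact .inl (by simp)
    · exact .inr ⟨(i, .inr 0), by simp, adj_inr_inl.mpr (.inl ⟨rfl, fun h => ha h.1⟩)⟩
  · obtain rfl | hb := eq_or_ne b 0
    · exact .inl (by simp)
    · exact .inr ⟨(i, .inl 0), by simp, adj_inl_inr.mpr (.inl ⟨rfl, fun h => hb h.2⟩)⟩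

lemma powerDomNumber_eq (hr : 3 ≤ r) : powerDomNumber (Dgraph r q) (r - 3) = 2 * q := by
  refine _root_.powerDomNumber_eq ⟨_, Set.toFinite _, ?_, isKPDS_prod_zero _⟩ fun S hS hK => ?_
  · simp [Set.ncard_prod, mul_comm]
  · simpa using two_mul_card_le_ncard hS Prod.fst (exists_ne_mem_copy_of_isKPDS hr hK)

end Dgraph

theorem Dgraph_powerDomNumber (r q : ℕ) (hr : 4 ≤ r) (hq : 2 ≤ q) :
    haveI : NeZero r := ⟨by omega⟩
    haveI : NeZero q := ⟨by omega⟩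
    (Dgraph r q).Connected ∧ RegularOfDegree (Dgraph r q) r ∧
      Nat.card (Fin q × (Fin r ⊕ Fin r)) = 2 * q * r ∧
      powerDomNumber (Dgraph r q) (r - 3) = 2 * q ∧
      2 * q = 2 * q * r / r ∧
      2 * q * r / (r + 1) < 2 * q := by
  have : NeZero r := ⟨by omega⟩
  have : NeZero q := ⟨by omega⟩
  refine ⟨Dgraph.connected (by omega), Dgraph.regularOfDegree, ?_,
    Dgraph.powerDomNumber_eq (by omega), ?_, ?_⟩
  · simp only [Nat.card_eq_fintype_card, Fintype.card_prod, Fintype.card_sum, Fintype.card_fin]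
    ring
  · rw [Nat.mul_div_cancel _ (by omega)]
  · rw [Nat.div_lt_iff_lt_mul (by omega)]
    exact Nat.mul_lt_mul_of_pos_left (by omega) (by omega)
end

section
/- For each k ≥ 1 and r ≥ 1, if G is a connected r-regular claw-free graph of order n, then the graph G' obtained by replacing each vertex with a clique of size k+1 and each edge with a complete join between the corresponding cliques is a connected claw-free (kr+r+k)-regular graph of order (k+1)n with γ_{p,k}(G') = γ(G). -/
open SimpleGraph

/-- Replace each vertex of `G` by a clique of size `m`, and each edge by a complete
join between the corresponding cliques. -/
def cliqueExpansion {V : Type*} (G : SimpleGraph V) (m : ℕ) :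
    SimpleGraph (V × Fin m) where
  Adj p p' := G.Adj p.1 p'.1 ∨ (p.1 = p'.1 ∧ p.2 ≠ p'.2)
  symm := by
    constructor
    intro p p' h
    rcases h with h | ⟨h1, h2⟩
    · exact Or.inl h.symm
    · exact Or.inr ⟨h1.symm, h2.symm⟩
  loopless := by
    constructor
    intro p h
    rcases h with h | ⟨_, h2⟩
    · exact G.ne_of_adj h rfl
    · exact h2 rfl

/-! The closed neighbourhood of any vertex set in the clique expansion `G'` is the union of the
cliques over the closed neighbourhood of its projection in `G`. So a vertex that sees an unmonitored
vertex sees that vertex's whole clique, at least `k + 1` unmonitored vertices, and the propagation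
rule of `k`-power domination never fires: the `k`-power dominating sets of `G'` are its dominating
sets, i.e. the sets whose projection dominates `G`. Lifting a dominating set of `G` along one clique
index shows that the minimum sizes agree. -/

lemma sInf_ncard_image_eq {α β : Type*} {f : α → β} (hf : Function.Surjective f)
    (P : Set β → Prop) :
    sInf {n | ∃ S : Set α, S.Finite ∧ S.ncard = n ∧ P (f '' S)} =
      sInf {n | ∃ D : Set β, D.Finite ∧ D.ncard = n ∧ P D} := by
  apply csInf_eq_csInf_of_forall_exists_le
  · rintro _ ⟨S, hS, rfl, hP⟩
    exact ⟨_, ⟨f '' S, hS.image f, rfl, hP⟩, Set.ncard_image_le hS⟩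
  · rintro _ ⟨D, hD, rfl, hP⟩
    refine ⟨_, ⟨Function.surjInv hf '' D, hD.image _, rfl, ?_⟩,
      (Set.ncard_image_of_injective _ (Function.injective_surjInv hf)).le⟩
    simpa only [Set.image_image, Function.surjInv_eq hf, Set.image_id']

section PowerDomination

variable {W : Type*} (H : SimpleGraph W) (k : ℕ)

lemma closedNbhd_eq_univ_iff (S : Set W) :
    closedNbhd H S = Set.univ ↔ ∀ v, v ∈ S ∨ ∃ u ∈ S, H.Adj v u := by
  simp only [Set.eq_univ_iff_forall, closedNbhd, Set.mem_union, Set.mem_ofPred_eq, H.adj_comm]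

lemma monitored_subset_closedNbhd [Finite W] {S : Set W}
    (hgap : ∀ v, closedNbhd H {v} ⊆ closedNbhd H S ∨
      k < (closedNbhd H {v} \ closedNbhd H S).ncard) :
    ∀ i, monitored H k S i ⊆ closedNbhd H S
  | 0 => subset_rfl
  | i + 1 => by
    rintro w ⟨v, -, hsmall, hw⟩
    refine (hgap v).resolve_right (fun hlarge => ?_) hw
    have : (closedNbhd H {v} \ closedNbhd H S).ncard ≤
        (closedNbhd H {v} \ monitored H k S i).ncard :=
      Set.ncard_le_ncard (Set.sdiff_subset_sdiff_right (monitored_subset_closedNbhd hgap i))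
    omega

lemma monitored_eq_univ_of_closedNbhd_eq_univ {S : Set W} (h : closedNbhd H S = Set.univ) :
    ∀ i, monitored H k S i = Set.univ
  | 0 => h
  | i + 1 => Set.eq_univ_of_forall fun w =>
    ⟨w, by simp [monitored_eq_univ_of_closedNbhd_eq_univ h i], by
      simp [monitored_eq_univ_of_closedNbhd_eq_univ h i], Or.inl rfl⟩

lemma isKPDS_iff_closedNbhd_eq_univ [Finite W] {S : Set W}
    (hgap : ∀ v, closedNbhd H {v} ⊆ closedNbhd H S ∨
      k < (closedNbhd H {v} \ closedNbhd H S).ncard) :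
    IsKPDS H k S ↔ closedNbhd H S = Set.univ :=
  ⟨fun h => Set.eq_univ_of_univ_subset (h ▸ monitored_subset_closedNbhd H k hgap _),
    fun h => monitored_eq_univ_of_closedNbhd_eq_univ H k h _⟩

end PowerDomination

section CliqueExpansion

variable {V : Type*} (G : SimpleGraph V) {m : ℕ}

lemma boxProd_top_le_cliqueExpansion : G.boxProd ⊤ ≤ cliqueExpansion G m := by
  rintro x y (⟨hadj, -⟩ | ⟨hne, heq⟩)
  · exact Or.inl hadj
  · exact Or.inr ⟨heq, hne⟩

variable {G} in
lemma SimpleGraph.Connected.cliqueExpansion [NeZero m] (h : G.Connected) :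
    (cliqueExpansion G m).Connected :=
  (h.boxProd connected_top).mono (boxProd_top_le_cliqueExpansion G)

lemma cliqueExpansion_fst_ne_of_not_adj {x y : V × Fin m} (hne : x ≠ y)
    (h : ¬ (cliqueExpansion G m).Adj x y) : x.1 ≠ y.1 :=
  fun heq => h (Or.inr ⟨heq, fun h2 => hne (Prod.ext heq h2)⟩)

lemma cliqueExpansion_adj_fst_of_not_adj {u a b : V × Fin m} (hua : (cliqueExpansion G m).Adj u a)
    (hub : (cliqueExpansion G m).Adj u b) (hab : a ≠ b)
    (hnab : ¬ (cliqueExpansion G m).Adj a b) : G.Adj u.1 a.1 := by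
  rcases hua with hua | ⟨hua, -⟩
  · exact hua
  rcases hub with hub | ⟨hub, -⟩
  · exact absurd (Or.inl (hua ▸ hub)) hnab
  · exact absurd (hua.symm.trans hub) (cliqueExpansion_fst_ne_of_not_adj G hab hnab)

variable {G} in
lemma ClawFree.cliqueExpansion (h : ClawFree G) : ClawFree (cliqueExpansion G m) := by
  intro u a b c hua hub huc hab hac hbc
  by_contra! hcon
  obtain ⟨hnab, hnac, hnbc⟩ := hcon
  rcases h u.1 a.1 b.1 c.1 (cliqueExpansion_adj_fst_of_not_adj G hua hub hab hnab)
      (cliqueExpansion_adj_fst_of_not_adj G hub hua hab.symm (mt SimpleGraph.Adj.symm hnab))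
      (cliqueExpansion_adj_fst_of_not_adj G huc hua hac.symm (mt SimpleGraph.Adj.symm hnac))
      (cliqueExpansion_fst_ne_of_not_adj G hab hnab) (cliqueExpansion_fst_ne_of_not_adj G hac hnac)
      (cliqueExpansion_fst_ne_of_not_adj G hbc hnbc) with h | h | h
  · exact hnab (Or.inl h)
  · exact hnac (Or.inl h)
  · exact hnbc (Or.inl h)

lemma neighborSet_cliqueExpansion (x : V × Fin m) :
    (cliqueExpansion G m).neighborSet x =
      G.neighborSet x.1 ×ˢ Set.univ ∪ {x.1} ×ˢ {x.2}ᶜ := by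
  ext ⟨w, j⟩
  simp only [SimpleGraph.mem_neighborSet, Set.mem_union, Set.mem_prod, Set.mem_univ, and_true,
    Set.mem_singleton_iff, Set.mem_compl_iff]
  exact or_congr Iff.rfl (and_congr eq_comm ne_comm)

variable {G} in
lemma RegularOfDegree.cliqueExpansion [Finite V] {r : ℕ} (h : RegularOfDegree G r) (k : ℕ) :
    RegularOfDegree (cliqueExpansion G (k + 1)) (r * (k + 1) + k) := by
  intro x
  have hdisj : Disjoint (G.neighborSet x.1 ×ˢ (Set.univ : Set (Fin (k + 1))))
      ({x.1} ×ˢ {x.2}ᶜ) :=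
    Set.disjoint_prod.2 (Or.inl (Set.disjoint_singleton_right.2 (G.notMem_neighborSet_self)))
  rw [neighborSet_cliqueExpansion, Set.ncard_union_eq hdisj, Set.ncard_prod, Set.ncard_prod,
    h, Set.ncard_univ, Set.ncard_singleton, Set.ncard_compl, Set.ncard_singleton, Nat.card_fin]
  omega

lemma closedNbhd_cliqueExpansion (S : Set (V × Fin m)) :
    closedNbhd (cliqueExpansion G m) S = Prod.fst ⁻¹' closedNbhd G (Prod.fst '' S) := by
  ext p
  constructor
  · rintro (hp | ⟨q, hq, hadj | ⟨heq, -⟩⟩)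
    · exact Or.inl ⟨p, hp, rfl⟩
    · exact Or.inr ⟨q.1, ⟨q, hq, rfl⟩, hadj⟩
    · exact Or.inl ⟨q, hq, heq⟩
  · rintro (⟨q, hq, heq⟩ | ⟨_, ⟨q, hq, rfl⟩, hadj⟩)
    · by_cases hqp : q = p
      · exact Or.inl (hqp ▸ hq)
      · exact Or.inr ⟨q, hq, Or.inr ⟨heq, fun h => hqp (Prod.ext heq h)⟩⟩
    · exact Or.inr ⟨q, hq, Or.inl hadj⟩

lemma closedNbhd_cliqueExpansion_eq_univ_iff [NeZero m] {S : Set (V × Fin m)} :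
    closedNbhd (cliqueExpansion G m) S = Set.univ ↔ closedNbhd G (Prod.fst '' S) = Set.univ := by
  rw [closedNbhd_cliqueExpansion, ← Set.preimage_univ,
    Set.preimage_eq_preimage (Prod.fst_surjective (β := Fin m))]

lemma cliqueExpansion_closedNbhd_subset_or_lt [Finite V] {k : ℕ} (S : Set (V × Fin (k + 1)))
    (v : V × Fin (k + 1)) :
    closedNbhd (cliqueExpansion G (k + 1)) {v} ⊆ closedNbhd (cliqueExpansion G (k + 1)) S ∨
      k < (closedNbhd (cliqueExpansion G (k + 1)) {v} \
        closedNbhd (cliqueExpansion G (k + 1)) S).ncard := by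
  set A := closedNbhd G {v.1} \ closedNbhd G (Prod.fst '' S)
  have hdiff : closedNbhd (cliqueExpansion G (k + 1)) {v} \
      closedNbhd (cliqueExpansion G (k + 1)) S = A ×ˢ Set.univ := by
    rw [closedNbhd_cliqueExpansion, closedNbhd_cliqueExpansion, Set.image_singleton,
      ← Set.preimage_sdiff, Set.prod_univ]
  rw [← Set.sdiff_eq_empty, hdiff, Set.ncard_prod, Set.ncard_univ, Nat.card_fin]
  rcases A.eq_empty_or_nonempty with h | h
  · exact Or.inl (by rw [h, Set.empty_prod])
  · exact Or.inr (by nlinarith [(Set.ncard_pos).2 h])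

lemma powerDomNumber_cliqueExpansion [Finite V] (k : ℕ) :
    powerDomNumber (cliqueExpansion G (k + 1)) k = domNumber G := by
  have hKPDS (S : Set (V × Fin (k + 1))) :
      IsKPDS (cliqueExpansion G (k + 1)) k S ↔ closedNbhd G (Prod.fst '' S) = Set.univ :=
    (isKPDS_iff_closedNbhd_eq_univ _ k (cliqueExpansion_closedNbhd_subset_or_lt G S)).trans
      (closedNbhd_cliqueExpansion_eq_univ_iff G)
  simp only [powerDomNumber, domNumber, hKPDS, ← closedNbhd_eq_univ_iff]
  exact sInf_ncard_image_eq Prod.fst_surjective (closedNbhd G · = Set.univ)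

end CliqueExpansion

theorem cliqueExpansion_powerDomNumber_general {V : Type*} [Finite V] (G : SimpleGraph V)
    (k r : ℕ) (hconn : G.Connected) (hcf : ClawFree G)
    (hreg : RegularOfDegree G r) :
    (cliqueExpansion G (k + 1)).Connected ∧
    ClawFree (cliqueExpansion G (k + 1)) ∧
    RegularOfDegree (cliqueExpansion G (k + 1)) (k * r + r + k) ∧
    Nat.card (V × Fin (k + 1)) = (k + 1) * Nat.card V ∧
    powerDomNumber (cliqueExpansion G (k + 1)) k = domNumber G := by
  refine ⟨hconn.cliqueExpansion, hcf.cliqueExpansion, ?_, ?_,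
    powerDomNumber_cliqueExpansion G k⟩
  · convert hreg.cliqueExpansion k using 1
    ring
  · rw [Nat.card_prod, Nat.card_fin, mul_comm]

theorem cliqueExpansion_powerDomNumber {V : Type*} [Finite V] (G : SimpleGraph V)
    (k r : ℕ) (hk : 1 ≤ k) (hr : 1 ≤ r) (hconn : G.Connected) (hcf : ClawFree G)
    (hreg : RegularOfDegree G r) :
    (cliqueExpansion G (k + 1)).Connected ∧
    ClawFree (cliqueExpansion G (k + 1)) ∧
    RegularOfDegree (cliqueExpansion G (k + 1)) (k * r + r + k) ∧
    Nat.card (V × Fin (k + 1)) = (k + 1) * Nat.card V ∧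
    powerDomNumber (cliqueExpansion G (k + 1)) k = domNumber G :=
  cliqueExpansion_powerDomNumber_general G k r hconn hcf hreg
end
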